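/- arXiv:1512.03171 — 5 statements merged into one kernel-verified Lean document; each statement's English description precedes it below -/
import Mathlib

section
/- Let F̂(z) = Mz + G(z) be a lift of a torus map satisfying the expanding-block assumption. Then for every z ∈ ℝ^d the limit Φ̂(z) := lim_{n→∞} A^{−n} P(F̂^n(z)) exists, the convergence is uniform in z, the map Φ̂ : ℝ^d → ℝ^k is continuous, and Φ̂(F̂(z)) = A·Φ̂(z) for every z ∈ ℝ^d. -/
/-!
Write `φₙ(z) = A⁻ⁿ P(F̂ⁿ z)`. Since `P F̂ = A P + P G` with `G` bounded, consecutive terms differ by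
`A⁻⁽ⁿ⁺¹⁾ P G(F̂ⁿ z)`, whose norm is at most `‖A⁻¹‖ⁿ⁺¹ sup ‖G‖`: the sequence is uniformly Cauchy at a
geometric rate, so it converges uniformly, and its limit is continuous as a uniform limit of
continuous maps. The identity `φₙ(F̂ z) = A φₙ₊₁(z)` passes to the limit and gives `Φ̂ ∘ F̂ = A ∘ Φ̂`.
-/

open Filter Topology

noncomputable section

/-- Reinterpret a vector `Fin d → ℝ` as a point of Euclidean space `ℝ^d`. -/
def toEuc (d : ℕ) (v : Fin d → ℝ) : EuclideanSpace ℝ (Fin d) := WithLp.toLp 2 v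

/-- Projection onto the first `k` coordinates of `ℝ^d`. -/
def projP (d k : ℕ) (h : k ≤ d) (z : EuclideanSpace ℝ (Fin d)) :
    EuclideanSpace ℝ (Fin k) :=
  WithLp.toLp 2 (fun i => z (Fin.castLE h i))

theorem tendstoUniformly_of_norm_sub_succ_le {β E : Type*} [NormedAddCommGroup E] [CompleteSpace E]
    {f : ℕ → β → E} {u : ℕ → ℝ} (hu : Summable u) (hf : ∀ n x, ‖f (n + 1) x - f n x‖ ≤ u n) :
    ∃ g, TendstoUniformly f g atTop := by
  have hsum : TendstoUniformly (fun n x => ∑ i ∈ Finset.range n, (f (i + 1) x - f i x))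
      (fun x => ∑' i, (f (i + 1) x - f i x)) atTop :=
    tendstoUniformly_tsum_nat hu hf
  refine ⟨f 0 + fun x => ∑' i, (f (i + 1) x - f i x), ?_⟩
  have hconst : TendstoUniformly (fun (_ : ℕ) => f 0) (f 0) atTop := fun _ hu =>
    Eventually.of_forall fun _ _ => refl_mem_uniformity hu
  convert hconst.add hsum using 1
  ext n x
  simp only [Pi.add_apply]
  rw [Finset.sum_range_sub (f · x), add_sub_cancel]

theorem ContinuousLinearEquiv.norm_pow_apply_le {𝕜 V : Type*} [NontriviallyNormedField 𝕜]
    [SeminormedAddCommGroup V] [NormedSpace 𝕜 V] (B : V ≃L[𝕜] V) (n : ℕ) (x : V) :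
    ‖(B ^ n) x‖ ≤ ‖(B : V →L[𝕜] V)‖ ^ n * ‖x‖ := by
  induction n with
  | zero => simp only [pow_zero, one_mul]; exact le_rfl
  | succ n ih =>
    calc ‖(B ^ (n + 1)) x‖ = ‖B ((B ^ n) x)‖ := by rw [pow_succ']; rfl
      _ ≤ ‖(B : V →L[𝕜] V)‖ * (‖(B : V →L[𝕜] V)‖ ^ n * ‖x‖) :=
        (B : V →L[𝕜] V).le_of_opNorm_le le_rfl _ |>.trans (by gcongr)
      _ = ‖(B : V →L[𝕜] V)‖ ^ (n + 1) * ‖x‖ := by ring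

section Semiconjugacy

variable {R X V : Type*} [Ring R] [TopologicalSpace V] [AddCommGroup V] [Module R V]
  (A : V ≃L[R] V) (F : X → X) (p : X → V)

theorem pow_symm_apply_iterate_succ_sub (n : ℕ) (z : X) :
    (A.symm ^ (n + 1)) (p (F^[n + 1] z)) - (A.symm ^ n) (p (F^[n] z)) =
      (A.symm ^ (n + 1)) (p (F (F^[n] z)) - A (p (F^[n] z))) := by
  rw [Function.iterate_succ_apply', map_sub, pow_succ]
  change _ = _ - (A.symm ^ n) (A.symm (A _))
  rw [A.symm_apply_apply]

theorem apply_eq_of_tendsto_pow_symm_apply_iterate [T2Space V] {Φ : X → V}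
    (hΦ : ∀ z, Tendsto (fun n => (A.symm ^ n) (p (F^[n] z))) atTop (𝓝 (Φ z))) (z : X) :
    Φ (F z) = A (Φ z) := by
  have hshift : ∀ n, (A.symm ^ n) (p (F^[n] (F z))) = A ((A.symm ^ (n + 1)) (p (F^[n + 1] z))) := by
    intro n
    rw [← Function.iterate_succ_apply F n z, pow_succ']
    exact (A.apply_symm_apply _).symm
  refine tendsto_nhds_unique (hΦ (F z)) ?_
  simp_rw [hshift]
  exact (A.continuous.tendsto _).comp ((hΦ z).comp (tendsto_add_atTop_nat 1))

end Semiconjugacy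

theorem exists_tendstoUniformly_pow_symm_apply_iterate {𝕜 X V : Type*} [NontriviallyNormedField 𝕜]
    [NormedAddCommGroup V] [NormedSpace 𝕜 V] [CompleteSpace V] (A : V ≃L[𝕜] V) (F : X → X)
    (p : X → V) (hA : ‖(A.symm : V →L[𝕜] V)‖ < 1) {C : ℝ} (hC : ∀ z, ‖p (F z) - A (p z)‖ ≤ C) :
    ∃ Φ : X → V, TendstoUniformly (fun n z => (A.symm ^ n) (p (F^[n] z))) Φ atTop := by
  set r := ‖(A.symm : V →L[𝕜] V)‖
  refine tendstoUniformly_of_norm_sub_succ_le (u := fun n => r ^ (n + 1) * C)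
    ((summable_geometric_of_lt_one (norm_nonneg _) hA).mul_left r |>.mul_right C
      |>.congr fun n => by ring) fun n z => ?_
  rw [pow_symm_apply_iterate_succ_sub]
  exact (A.symm.norm_pow_apply_le _ _).trans (by gcongr; exact hC _)

theorem projP_add (d k : ℕ) (h : k ≤ d) (x y : EuclideanSpace ℝ (Fin d)) :
    projP d k h (x + y) = projP d k h x + projP d k h y := rfl

theorem norm_projP_le (d k : ℕ) (h : k ≤ d) (z : EuclideanSpace ℝ (Fin d)) :
    ‖projP d k h z‖ ≤ ‖z‖ := by
  rw [EuclideanSpace.norm_eq, EuclideanSpace.norm_eq]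
  gcongr
  calc ∑ i : Fin k, ‖z (Fin.castLE h i)‖ ^ 2
      = ∑ j ∈ Finset.univ.map (Fin.castLEEmb h), ‖z j‖ ^ 2 := by rw [Finset.sum_map]; rfl
    _ ≤ ∑ j, ‖z j‖ ^ 2 :=
      Finset.sum_le_sum_of_subset_of_nonneg (Finset.subset_univ _) fun _ _ _ => by positivity

theorem continuous_projP (d k : ℕ) (h : k ≤ d) : Continuous (projP d k h) := by
  unfold projP
  fun_prop

theorem stmt0_general (d k : ℕ) (hkd : k ≤ d)
    (M : Matrix (Fin d) (Fin d) ℝ)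
    (G : EuclideanSpace ℝ (Fin d) → EuclideanSpace ℝ (Fin d))
    (hGcont : Continuous G) (hGbdd : ∃ C, ∀ z, ‖G z‖ ≤ C)
    (F : EuclideanSpace ℝ (Fin d) → EuclideanSpace ℝ (Fin d))
    (hF : ∀ z, F z = toEuc d (M.mulVec z) + G z)
    (A : EuclideanSpace ℝ (Fin k) ≃L[ℝ] EuclideanSpace ℝ (Fin k))
    (hPM : ∀ z : EuclideanSpace ℝ (Fin d),
      projP d k hkd (toEuc d (M.mulVec z)) = A (projP d k hkd z))
    (hA : ‖(A.symm : EuclideanSpace ℝ (Fin k) →L[ℝ] EuclideanSpace ℝ (Fin k))‖ < 1) :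
    ∃ Φ : EuclideanSpace ℝ (Fin d) → EuclideanSpace ℝ (Fin k),
      (∀ z, Tendsto (fun n : ℕ => (A.symm ^ n) (projP d k hkd (F^[n] z)))
        atTop (𝓝 (Φ z))) ∧
      TendstoUniformly (fun (n : ℕ) (z : EuclideanSpace ℝ (Fin d)) =>
        (A.symm ^ n) (projP d k hkd (F^[n] z))) Φ atTop ∧
      Continuous Φ ∧
      (∀ z, Φ (F z) = A (Φ z)) := by
  obtain ⟨C, hC⟩ := hGbdd
  have hdefect : ∀ z, ‖projP d k hkd (F z) - A (projP d k hkd z)‖ ≤ C := fun z => by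
    rw [hF, projP_add, hPM, add_sub_cancel_left]
    exact (norm_projP_le d k hkd _).trans (hC z)
  obtain ⟨Φ, hΦ⟩ := exists_tendstoUniformly_pow_symm_apply_iterate A F _ hA hdefect
  have hFcont : Continuous F := by
    rw [funext hF]
    exact (Matrix.toEuclideanLin M).continuous_of_finiteDimensional.add hGcont
  have hcont : ∀ n, Continuous fun z => (A.symm ^ n) (projP d k hkd (F^[n] z)) := fun n =>
    (A.symm ^ n).continuous.comp ((continuous_projP d k hkd).comp (hFcont.iterate n))
  exact ⟨Φ, hΦ.tendsto_at, hΦ, hΦ.continuous (Frequently.of_forall hcont),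
    apply_eq_of_tendsto_pow_symm_apply_iterate A F _ hΦ.tendsto_at⟩

/--
Let `F̂(z) = Mz + G(z)` be a lift of a torus map satisfying the
expanding-block assumption. Then for every `z ∈ ℝ^d` the limit
`Φ̂(z) := lim_{n→∞} A⁻ⁿ P(F̂ⁿ(z))` exists, the convergence is uniform in `z`, the map
`Φ̂ : ℝ^d → ℝ^k` is continuous, and `Φ̂(F̂(z)) = A·Φ̂(z)` for every `z`.
-/
theorem stmt0 (d k : ℕ) (hk : 1 ≤ k) (hkd : k ≤ d)
    (M : Matrix (Fin d) (Fin d) ℝ) (hMint : ∀ i j, ∃ n : ℤ, M i j = (n : ℝ))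
    (G : EuclideanSpace ℝ (Fin d) → EuclideanSpace ℝ (Fin d))
    (hGcont : Continuous G) (hGbdd : ∃ C, ∀ z, ‖G z‖ ≤ C)
    (hGper : ∀ (z : EuclideanSpace ℝ (Fin d)) (p : Fin d → ℤ),
      G (z + toEuc d fun i => (p i : ℝ)) = G z)
    (F : EuclideanSpace ℝ (Fin d) → EuclideanSpace ℝ (Fin d))
    (hF : ∀ z, F z = toEuc d (M.mulVec z) + G z)
    (A : EuclideanSpace ℝ (Fin k) ≃L[ℝ] EuclideanSpace ℝ (Fin k))
    (hPM : ∀ z : EuclideanSpace ℝ (Fin d),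
      projP d k hkd (toEuc d (M.mulVec z)) = A (projP d k hkd z))
    (hA : ‖(A.symm : EuclideanSpace ℝ (Fin k) →L[ℝ] EuclideanSpace ℝ (Fin k))‖ < 1) :
    ∃ Φ : EuclideanSpace ℝ (Fin d) → EuclideanSpace ℝ (Fin k),
      (∀ z, Tendsto (fun n : ℕ => (A.symm ^ n) (projP d k hkd (F^[n] z)))
        atTop (𝓝 (Φ z))) ∧
      TendstoUniformly (fun (n : ℕ) (z : EuclideanSpace ℝ (Fin d)) =>
        (A.symm ^ n) (projP d k hkd (F^[n] z))) Φ atTop ∧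
      Continuous Φ ∧
      (∀ z, Φ (F z) = A (Φ z)) :=
  stmt0_general d k hkd M G hGcont hGbdd F hF A hPM hA
end
end

section
/- Let F̂(z) = Mz + G(z) be a lift of a torus map satisfying the expanding-block assumption, and let Φ̂(z) = lim_{n→∞} A^{−n} P(F̂^n(z)). Then for every z ∈ ℝ^d and every integer vector p ∈ ℤ^d, Φ̂(z + p) = Φ̂(z) + P p. Consequently Φ̂ descends to a well-defined map Φ between the quotients ℝ^d/ℤ^d and ℝ^k/ℤ^k. -/
/-!
An integer translation passes through the lift with only its linear part:
`F̂ (z + p) = F̂ z + M p`, and `M p` is again an integer vector, so `F̂ⁿ (z + p) = F̂ⁿ z + Mⁿ p`.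
Since `P ∘ M = A ∘ P`, every term `A⁻ⁿ P (F̂ⁿ (z + p))` of the sequence defining `Φ̂ (z + p)`
exceeds the corresponding term for `z` by exactly `A⁻ⁿ Aⁿ P p = P p`. As `P p ∈ ℤ^k`, the map
`Φ̂` then respects the equivalence relations defining the two tori.
-/

open Filter Topology

noncomputable section

/-- The canonical projection `ℝ^n → ℝ^n/ℤ^n` (the `n`-torus), coordinatewise `mod 1`. -/
def torusProj (n : ℕ) (z : EuclideanSpace ℝ (Fin n)) : Fin n → AddCircle (1 : ℝ) :=
  fun i => ((z i : ℝ) : AddCircle (1 : ℝ))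

def intLattice (n : ℕ) : Set (EuclideanSpace ℝ (Fin n)) :=
  Set.range fun p : Fin n → ℤ => toEuc n fun i => (p i : ℝ)

theorem Matrix.exists_mulVec_intCast {m n : Type*} [Fintype n] {M : Matrix m n ℝ}
    (hM : ∀ i j, ∃ a : ℤ, M i j = a) (p : n → ℤ) :
    ∃ q : m → ℤ, M.mulVec (fun j => (p j : ℝ)) = fun i => (q i : ℝ) := by
  choose N hN using hM
  refine ⟨(Matrix.of N).mulVec p, funext fun i => ?_⟩
  rw [show M = (Matrix.of N).map (Int.castRingHom ℝ) from Matrix.ext hN]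
  exact (RingHom.map_mulVec (Int.castRingHom ℝ) _ p i).symm

theorem mapsTo_mulVec_intLattice {d : ℕ} {M : Matrix (Fin d) (Fin d) ℝ}
    (hM : ∀ i j, ∃ a : ℤ, M i j = a) :
    Set.MapsTo (fun v : EuclideanSpace ℝ (Fin d) => toEuc d (M.mulVec v))
      (intLattice d) (intLattice d) := by
  rintro _ ⟨p, rfl⟩
  obtain ⟨q, hq⟩ := M.exists_mulVec_intCast hM p
  exact ⟨q, congrArg (toEuc d) hq.symm⟩

theorem Function.iterate_add_of_map_add {E : Type*} [Add E] {F L : E → E} {S : Set E}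
    (hLS : Set.MapsTo L S S) (hF : ∀ z, ∀ v ∈ S, F (z + v) = F z + L v) (n : ℕ) :
    ∀ z, ∀ v ∈ S, F^[n] (z + v) = F^[n] z + L^[n] v := by
  induction n with
  | zero => intro z v _; rfl
  | succ n ih =>
    intro z v hv
    simp only [Function.iterate_succ_apply, hF z v hv, ih _ _ (hLS hv)]

theorem ContinuousLinearEquiv.symm_pow_apply_iterate {R E : Type*} [Semiring R]
    [TopologicalSpace E] [AddCommMonoid E] [Module R E] (A : E ≃L[R] E) (n : ℕ) (x : E) :
    (A.symm ^ n) (A^[n] x) = x := by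
  rw [← hom_coe_pow (fun e : E ≃L[R] E => ⇑e) rfl (fun _ _ => rfl) A n,
    show A.symm = A⁻¹ from rfl, inv_pow]
  exact (A ^ n).symm_apply_apply x

section Lift

variable {d k : ℕ} {M : Matrix (Fin d) (Fin d) ℝ}
  {G F : EuclideanSpace ℝ (Fin d) → EuclideanSpace ℝ (Fin d)}

theorem lift_add_of_mem_intLattice
    (hGper : ∀ (z : EuclideanSpace ℝ (Fin d)) (p : Fin d → ℤ),
      G (z + toEuc d fun i => (p i : ℝ)) = G z)
    (hF : ∀ z, F z = toEuc d (M.mulVec z) + G z) (z : EuclideanSpace ℝ (Fin d)) {v}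
    (hv : v ∈ intLattice d) : F (z + v) = F z + toEuc d (M.mulVec v) := by
  obtain ⟨p, rfl⟩ := hv
  rw [hF, hF, hGper, WithLp.ofLp_add, Matrix.mulVec_add]
  simp only [toEuc, WithLp.toLp_add]
  abel

theorem symm_pow_projP_iterate_add_of_mem_intLattice (hkd : k ≤ d)
    (hMint : ∀ i j, ∃ n : ℤ, M i j = (n : ℝ))
    (hGper : ∀ (z : EuclideanSpace ℝ (Fin d)) (p : Fin d → ℤ),
      G (z + toEuc d fun i => (p i : ℝ)) = G z)
    (hF : ∀ z, F z = toEuc d (M.mulVec z) + G z)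
    (A : EuclideanSpace ℝ (Fin k) ≃L[ℝ] EuclideanSpace ℝ (Fin k))
    (hPM : ∀ z : EuclideanSpace ℝ (Fin d),
      projP d k hkd (toEuc d (M.mulVec z)) = A (projP d k hkd z))
    (n : ℕ) (z : EuclideanSpace ℝ (Fin d)) {v} (hv : v ∈ intLattice d) :
    (A.symm ^ n) (projP d k hkd (F^[n] (z + v))) =
      (A.symm ^ n) (projP d k hkd (F^[n] z)) + projP d k hkd v := by
  have hPL : Function.Semiconj (projP d k hkd) (fun v => toEuc d (M.mulVec v)) A := hPM
  rw [Function.iterate_add_of_map_add (mapsTo_mulVec_intLattice hMint)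
      (fun z _ hv => lift_add_of_mem_intLattice hGper hF z hv) n z v hv,
    projP_add, map_add, hPL.iterate_right n v, A.symm_pow_apply_iterate]

end Lift

theorem torusProj_add_of_mem_intLattice {n : ℕ} (z : EuclideanSpace ℝ (Fin n)) {v}
    (hv : v ∈ intLattice n) : torusProj n (z + v) = torusProj n z := by
  obtain ⟨p, rfl⟩ := hv
  funext i
  have hp : ((p i : ℝ) : AddCircle (1 : ℝ)) = 0 := (AddCircle.coe_eq_zero_iff 1).2 ⟨p i, by simp⟩
  show ((z i + p i : ℝ) : AddCircle (1 : ℝ)) = (z i : AddCircle (1 : ℝ))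
  rw [AddCircle.coe_add, hp, add_zero]

theorem sub_mem_intLattice_of_torusProj_eq {n : ℕ} {z z' : EuclideanSpace ℝ (Fin n)}
    (h : torusProj n z = torusProj n z') : z' - z ∈ intLattice n := by
  have hcoord (i : Fin n) : ∃ a : ℤ, a • (1 : ℝ) = z' i - z i := by
    rw [← AddCircle.coe_eq_zero_iff, AddCircle.coe_sub, sub_eq_zero]
    exact (congrFun h i).symm
  choose p hp using hcoord
  exact ⟨p, PiLp.ext fun i => by simpa [toEuc] using hp i⟩

theorem mapsTo_projP_intLattice (d k : ℕ) (h : k ≤ d) :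
    Set.MapsTo (projP d k h) (intLattice d) (intLattice k) := by
  rintro _ ⟨p, rfl⟩
  exact ⟨fun i => p (Fin.castLE h i), rfl⟩

theorem exists_torus_factor_of_add_mem_intLattice {d k : ℕ} (h : k ≤ d)
    {Φ : EuclideanSpace ℝ (Fin d) → EuclideanSpace ℝ (Fin k)}
    (hΦ : ∀ z, ∀ v ∈ intLattice d, Φ (z + v) = Φ z + projP d k h v) :
    ∃ Φbar : (Fin d → AddCircle (1 : ℝ)) → (Fin k → AddCircle (1 : ℝ)),
      ∀ z, Φbar (torusProj d z) = torusProj k (Φ z) := by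
  have hfactor : Function.FactorsThrough (torusProj k ∘ Φ) (torusProj d) := by
    intro z z' hzz'
    have hv := sub_mem_intLattice_of_torusProj_eq hzz'
    have hΦz' : Φ z' = Φ z + projP d k h (z' - z) := by
      rw [← hΦ z _ hv, add_sub_cancel]
    simp only [Function.comp_apply, hΦz',
      torusProj_add_of_mem_intLattice _ (mapsTo_projP_intLattice d k h hv)]
  exact ⟨Function.extend (torusProj d) (torusProj k ∘ Φ) 0, hfactor.extend_apply 0⟩

theorem stmt2_general (d k : ℕ) (hkd : k ≤ d)
    (M : Matrix (Fin d) (Fin d) ℝ) (hMint : ∀ i j, ∃ n : ℤ, M i j = (n : ℝ))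
    (G : EuclideanSpace ℝ (Fin d) → EuclideanSpace ℝ (Fin d))
    (hGper : ∀ (z : EuclideanSpace ℝ (Fin d)) (p : Fin d → ℤ),
      G (z + toEuc d fun i => (p i : ℝ)) = G z)
    (F : EuclideanSpace ℝ (Fin d) → EuclideanSpace ℝ (Fin d))
    (hF : ∀ z, F z = toEuc d (M.mulVec z) + G z)
    (A : EuclideanSpace ℝ (Fin k) ≃L[ℝ] EuclideanSpace ℝ (Fin k))
    (hPM : ∀ z : EuclideanSpace ℝ (Fin d),
      projP d k hkd (toEuc d (M.mulVec z)) = A (projP d k hkd z))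
    (Φ : EuclideanSpace ℝ (Fin d) → EuclideanSpace ℝ (Fin k))
    (hΦ : ∀ z, Tendsto (fun n : ℕ => (A.symm ^ n) (projP d k hkd (F^[n] z)))
      atTop (𝓝 (Φ z))) :
    (∀ (z : EuclideanSpace ℝ (Fin d)) (p : Fin d → ℤ),
      Φ (z + toEuc d fun i => (p i : ℝ)) = Φ z + projP d k hkd (toEuc d fun i => (p i : ℝ))) ∧
    ∃ Φbar : (Fin d → AddCircle (1 : ℝ)) → (Fin k → AddCircle (1 : ℝ)),
      ∀ z : EuclideanSpace ℝ (Fin d), Φbar (torusProj d z) = torusProj k (Φ z) := by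
  have hΦadd : ∀ z, ∀ v ∈ intLattice d, Φ (z + v) = Φ z + projP d k hkd v := fun z v hv =>
    tendsto_nhds_unique
      ((hΦ (z + v)).congr fun n =>
        symm_pow_projP_iterate_add_of_mem_intLattice hkd hMint hGper hF A hPM n z hv)
      ((hΦ z).add_const _)
  exact ⟨fun z p => hΦadd z _ ⟨p, rfl⟩, exists_torus_factor_of_add_mem_intLattice hkd hΦadd⟩

/--
Let `F̂(z) = Mz + G(z)` be a lift of a torus map satisfying the
expanding-block assumption, and let `Φ̂(z) = lim_{n→∞} A⁻ⁿ P(F̂ⁿ(z))`. Then for every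
`z ∈ ℝ^d` and every integer vector `p ∈ ℤ^d`, `Φ̂(z + p) = Φ̂(z) + P p`. Consequently `Φ̂`
descends to a well-defined map `Φ` between the quotients `ℝ^d/ℤ^d` and `ℝ^k/ℤ^k`.
-/
theorem stmt2 (d k : ℕ) (hk : 1 ≤ k) (hkd : k ≤ d)
    (M : Matrix (Fin d) (Fin d) ℝ) (hMint : ∀ i j, ∃ n : ℤ, M i j = (n : ℝ))
    (G : EuclideanSpace ℝ (Fin d) → EuclideanSpace ℝ (Fin d))
    (hGcont : Continuous G) (hGbdd : ∃ C, ∀ z, ‖G z‖ ≤ C)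
    (hGper : ∀ (z : EuclideanSpace ℝ (Fin d)) (p : Fin d → ℤ),
      G (z + toEuc d fun i => (p i : ℝ)) = G z)
    (F : EuclideanSpace ℝ (Fin d) → EuclideanSpace ℝ (Fin d))
    (hF : ∀ z, F z = toEuc d (M.mulVec z) + G z)
    (A : EuclideanSpace ℝ (Fin k) ≃L[ℝ] EuclideanSpace ℝ (Fin k))
    (hPM : ∀ z : EuclideanSpace ℝ (Fin d),
      projP d k hkd (toEuc d (M.mulVec z)) = A (projP d k hkd z))
    (hA : ‖(A.symm : EuclideanSpace ℝ (Fin k) →L[ℝ] EuclideanSpace ℝ (Fin k))‖ < 1)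
    (Φ : EuclideanSpace ℝ (Fin d) → EuclideanSpace ℝ (Fin k))
    (hΦ : ∀ z, Tendsto (fun n : ℕ => (A.symm ^ n) (projP d k hkd (F^[n] z)))
      atTop (𝓝 (Φ z))) :
    (∀ (z : EuclideanSpace ℝ (Fin d)) (p : Fin d → ℤ),
      Φ (z + toEuc d fun i => (p i : ℝ)) = Φ z + projP d k hkd (toEuc d fun i => (p i : ℝ))) ∧
    ∃ Φbar : (Fin d → AddCircle (1 : ℝ)) → (Fin k → AddCircle (1 : ℝ)),
      ∀ z : EuclideanSpace ℝ (Fin d), Φbar (torusProj d z) = torusProj k (Φ z) :=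
  stmt2_general d k hkd M hMint G hGper F hF A hPM Φ hΦ
end
end

section
/- Let F̂: ℝ^d → ℝ^d be a bijective lift of a torus map, F̂(z) = Mz + G(z), with M invertible. Let P_s: ℝ^d → ℝ^s be a surjective linear map and A_s an s×s real matrix with P_s∘M = A_s∘P_s and operator norm ‖A_s‖ < 1. Then for every z ∈ ℝ^d the limit Φ̂_s(z) := lim_{n→∞} A_s^{n} P_s(F̂^{−n}(z)) exists, the convergence is uniform in z, Φ̂_s is continuous (provided F̂^{−1} is continuous), and Φ̂_s(F̂(z)) = A_s·Φ̂_s(z) for every z ∈ ℝ^d. -/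
/-!
Write `δ y := P y - A (P (F⁻¹ y))`; since `P ∘ M = A ∘ P`, this is `P (G (F⁻¹ y))`, so `δ` is
bounded. The sequence `Aⁿ P (F⁻ⁿ z)` telescopes to `P z - ∑_{k<n} Aᵏ δ (F⁻ᵏ z)`, whose terms are
bounded by `‖A‖ᵏ ‖P‖ sup ‖G‖`, so the Weierstrass M-test gives uniform convergence. Continuity
follows from uniform convergence, and the conjugacy from shifting the index by one.
-/

open Filter Topology

noncomputable section

open Finset

section RenormalizedIterates

variable {𝕜 X E : Type*} [NontriviallyNormedField 𝕜] [NormedAddCommGroup E] [NormedSpace 𝕜 E]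

theorem ContinuousLinearMap.norm_pow_apply_le (A : E →L[𝕜] E) (n : ℕ) (v : E) :
    ‖(A ^ n) v‖ ≤ ‖A‖ ^ n * ‖v‖ := by
  induction n generalizing v with
  | zero => simp
  | succ n ih =>
    calc ‖(A ^ (n + 1)) v‖ = ‖(A ^ n) (A v)‖ := by rw [pow_succ, mul_apply_eq_comp]
      _ ≤ ‖A‖ ^ n * (‖A‖ * ‖v‖) := (ih (A v)).trans (by gcongr; exact A.le_opNorm v)
      _ = ‖A‖ ^ (n + 1) * ‖v‖ := by ring

variable (A : E →L[𝕜] E) (p : X → E) (T : X → X)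

def renormIter (n : ℕ) (x : X) : E :=
  (A ^ n) (p (T^[n] x))

def renormDefect (x : X) : E :=
  p x - A (p (T x))

def renormLimit (x : X) : E :=
  p x - ∑' k, (A ^ k) (renormDefect A p T (T^[k] x))

theorem renormIter_sub_succ (n : ℕ) (x : X) :
    renormIter A p T n x - renormIter A p T (n + 1) x = (A ^ n) (renormDefect A p T (T^[n] x)) := by
  rw [renormIter, renormIter, renormDefect, map_sub, pow_succ, mul_apply_eq_comp,
    Function.iterate_succ_apply']

theorem renormIter_eq_sub_sum (n : ℕ) (x : X) :
    renormIter A p T n x = p x - ∑ k ∈ range n, (A ^ k) (renormDefect A p T (T^[k] x)) := by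
  simp only [← renormIter_sub_succ, sum_range_sub', renormIter, pow_zero, Function.iterate_zero,
    id, one_apply_eq_self, sub_sub_cancel]

variable {A p T}

theorem tendstoUniformly_renormIter [CompleteSpace E] {C : ℝ} (hA : ‖A‖ < 1)
    (hC : ∀ x, ‖renormDefect A p T x‖ ≤ C) :
    TendstoUniformly (renormIter A p T) (renormLimit A p T) atTop := by
  have hsum : Summable fun k : ℕ => ‖A‖ ^ k * C :=
    (summable_geometric_of_lt_one (norm_nonneg _) hA).mul_right C
  have hM := tendstoUniformly_tsum_nat hsum fun k (x : X) =>
    (A.norm_pow_apply_le k (renormDefect A p T (T^[k] x))).trans (by gcongr; exact hC _)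
  rw [Metric.tendstoUniformly_iff] at hM ⊢
  simpa only [renormLimit, renormIter_eq_sub_sum, dist_sub_left] using hM

theorem continuous_renormLimit [CompleteSpace E] {C : ℝ} (hA : ‖A‖ < 1)
    (hC : ∀ x, ‖renormDefect A p T x‖ ≤ C) [TopologicalSpace X] (hp : Continuous p)
    (hT : Continuous T) : Continuous (renormLimit A p T) :=
  (tendstoUniformly_renormIter hA hC).continuous <| Frequently.of_forall fun n =>
    (A ^ n).continuous.comp (hp.comp (hT.iterate n))

theorem renormLimit_apply_of_leftInverse [CompleteSpace E] {C : ℝ} (hA : ‖A‖ < 1)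
    (hC : ∀ x, ‖renormDefect A p T x‖ ≤ C) {S : X → X} (hTS : Function.LeftInverse T S)
    (x : X) : renormLimit A p T (S x) = A (renormLimit A p T x) := by
  have hlim := (tendstoUniformly_renormIter hA hC).tendsto_at
  have hshift : ∀ n, renormIter A p T (n + 1) (S x) = A (renormIter A p T n x) := fun n => by
    rw [renormIter, renormIter, Function.iterate_succ_apply, hTS x, pow_succ',
      mul_apply_eq_comp]
  refine tendsto_nhds_unique ((hlim (S x)).comp (tendsto_add_atTop_nat 1)) ?_
  simpa only [Function.comp_def, hshift] using (A.continuous.tendsto _).comp (hlim x)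

end RenormalizedIterates

theorem stmt6_general (d s : ℕ)
    (M : Matrix (Fin d) (Fin d) ℝ)
    (G : EuclideanSpace ℝ (Fin d) → EuclideanSpace ℝ (Fin d))
    (hGbdd : ∃ C, ∀ z, ‖G z‖ ≤ C)
    (F : EuclideanSpace ℝ (Fin d) → EuclideanSpace ℝ (Fin d))
    (hF : ∀ z, F z = toEuc d (M.mulVec z) + G z)
    (Finv : EuclideanSpace ℝ (Fin d) → EuclideanSpace ℝ (Fin d))
    (hFinv : Function.LeftInverse Finv F ∧ Function.RightInverse Finv F)
    (Ps : EuclideanSpace ℝ (Fin d) →L[ℝ] EuclideanSpace ℝ (Fin s))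
    (As : EuclideanSpace ℝ (Fin s) →L[ℝ] EuclideanSpace ℝ (Fin s))
    (hPsM : ∀ z : EuclideanSpace ℝ (Fin d), Ps (toEuc d (M.mulVec z)) = As (Ps z))
    (hAs : ‖As‖ < 1) :
    ∃ Φs : EuclideanSpace ℝ (Fin d) → EuclideanSpace ℝ (Fin s),
      (∀ z, Tendsto (fun n : ℕ => (As ^ n) (Ps (Finv^[n] z))) atTop (𝓝 (Φs z))) ∧
      TendstoUniformly (fun (n : ℕ) (z : EuclideanSpace ℝ (Fin d)) =>
        (As ^ n) (Ps (Finv^[n] z))) Φs atTop ∧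
      (Continuous Finv → Continuous Φs) ∧
      (∀ z, Φs (F z) = As (Φs z)) := by
  obtain ⟨C, hC⟩ := hGbdd
  have hdefect : ∀ z, ‖renormDefect As Ps Finv z‖ ≤ ‖Ps‖ * C := fun z => by
    have hsplit : Ps z = As (Ps (Finv z)) + Ps (G (Finv z)) := by
      conv_lhs => rw [← hFinv.2 z, hF, map_add, hPsM]
    rw [renormDefect, hsplit, add_sub_cancel_left]
    exact Ps.le_opNorm_of_le (hC _)
  have hunif := tendstoUniformly_renormIter hAs hdefect
  exact ⟨renormLimit As Ps Finv, hunif.tendsto_at, hunif,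
    fun hcont => continuous_renormLimit hAs hdefect Ps.continuous hcont,
    renormLimit_apply_of_leftInverse hAs hdefect hFinv.1⟩

/--
Let `F̂ : ℝ^d → ℝ^d` be a bijective lift of a torus map,
`F̂(z) = Mz + G(z)`, with `M` invertible. Let `P_s : ℝ^d → ℝ^s` be a surjective linear map
and `A_s` an `s×s` real matrix with `P_s∘M = A_s∘P_s` and operator norm `‖A_s‖ < 1`. Then
for every `z ∈ ℝ^d` the limit `Φ̂_s(z) := lim_{n→∞} A_sⁿ P_s(F̂^{−n}(z))` exists, the
convergence is uniform in `z`, `Φ̂_s` is continuous (provided `F̂⁻¹` is continuous), and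
`Φ̂_s(F̂(z)) = A_s·Φ̂_s(z)` for every `z ∈ ℝ^d`.
-/
theorem stmt6 (d s : ℕ)
    (M : Matrix (Fin d) (Fin d) ℝ) (hMint : ∀ i j, ∃ n : ℤ, M i j = (n : ℝ))
    (hMinv : IsUnit M)
    (G : EuclideanSpace ℝ (Fin d) → EuclideanSpace ℝ (Fin d))
    (hGcont : Continuous G) (hGbdd : ∃ C, ∀ z, ‖G z‖ ≤ C)
    (hGper : ∀ (z : EuclideanSpace ℝ (Fin d)) (p : Fin d → ℤ),
      G (z + toEuc d fun i => (p i : ℝ)) = G z)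
    (F : EuclideanSpace ℝ (Fin d) → EuclideanSpace ℝ (Fin d))
    (hF : ∀ z, F z = toEuc d (M.mulVec z) + G z)
    (hFbij : Function.Bijective F)
    (Finv : EuclideanSpace ℝ (Fin d) → EuclideanSpace ℝ (Fin d))
    (hFinv : Function.LeftInverse Finv F ∧ Function.RightInverse Finv F)
    (Ps : EuclideanSpace ℝ (Fin d) →L[ℝ] EuclideanSpace ℝ (Fin s))
    (hPs : Function.Surjective Ps)
    (As : EuclideanSpace ℝ (Fin s) →L[ℝ] EuclideanSpace ℝ (Fin s))
    (hPsM : ∀ z : EuclideanSpace ℝ (Fin d), Ps (toEuc d (M.mulVec z)) = As (Ps z))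
    (hAs : ‖As‖ < 1) :
    ∃ Φs : EuclideanSpace ℝ (Fin d) → EuclideanSpace ℝ (Fin s),
      (∀ z, Tendsto (fun n : ℕ => (As ^ n) (Ps (Finv^[n] z))) atTop (𝓝 (Φs z))) ∧
      TendstoUniformly (fun (n : ℕ) (z : EuclideanSpace ℝ (Fin d)) =>
        (As ^ n) (Ps (Finv^[n] z))) Φs atTop ∧
      (Continuous Finv → Continuous Φs) ∧
      (∀ z, Φs (F z) = As (Φs z)) :=
  stmt6_general d s M G hGbdd F hF Finv hFinv Ps As hPsM hAs
end
end

section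
/- Let F̂(z) = Mz + G(z) be a lift of a torus map. Suppose v ∈ ℤ^d is a nonzero integer vector and m an integer with |m| > 1 such that vᵀM = m·vᵀ (v is an integer left eigenvector of M with eigenvalue m). Then for every z ∈ ℝ^d the limit φ̂(z) := lim_{n→∞} m^{−n} (v · F̂^{n}(z)) exists, φ̂: ℝ^d → ℝ is continuous and onto, φ̂(F̂(z)) = m·φ̂(z) for all z, and φ̂(z + p) = φ̂(z) + v·p for all z ∈ ℝ^d and p ∈ ℤ^d. Hence F̂ descends to a torus map on ℝ^d/ℤ^d semi-conjugate to the expanding circle map x ↦ mx mod 1. -/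
open Filter Topology

noncomputable section

/-!
Since `vᵀM = m vᵀ`, the functional `ψ z = v · z` satisfies `ψ (F̂ z) = m ψ z + ψ (G z)` with
`ψ ∘ G` bounded, so the increments of `m⁻ⁿ ψ (F̂ⁿ z)` are `O(|m|⁻ⁿ)` uniformly in `z`: the limit
`φ̂` exists and is a uniform limit of continuous functions. For `p ∈ ℤ^d` we have
`F̂ (z + p) = F̂ z + M p` with `M p ∈ ℤ^d` and `ψ (M p) = m ψ p`, so the renormalized sequences at
`z + p` and at `z` differ by exactly `v · p`. As `v · p ∈ ℤ`, this lets `F̂` and `φ̂` descend to the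
torus, and applied to a coordinate vector `eⱼ` with `vⱼ ≠ 0` it makes `φ̂` unbounded in both
directions along a line, hence onto by the intermediate value theorem.
-/

open Function
open scoped Matrix

section RenormalizedLimit

variable {X : Type*} {f : X → X} {ψ : X → ℝ} {m : ℝ}

theorem exists_continuous_tendsto_inv_pow_mul_iterate [TopologicalSpace X] (hf : Continuous f)
    (hψ : Continuous ψ) (hm : 1 < |m|) {B : ℝ} (hB : ∀ x, |ψ (f x) - m * ψ x| ≤ B) :
    ∃ φ : X → ℝ, Continuous φ ∧
      ∀ x, Tendsto (fun n : ℕ => (m ^ n)⁻¹ * ψ (f^[n] x)) atTop (𝓝 (φ x)) := by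
  have hm0 : m ≠ 0 := abs_pos.mp (zero_lt_one.trans hm)
  set r := |m|⁻¹
  have hr : r < 1 := inv_lt_one_of_one_lt₀ hm
  set δ : ℕ → X → ℝ := fun k x =>
    (m ^ (k + 1))⁻¹ * ψ (f^[k + 1] x) - (m ^ k)⁻¹ * ψ (f^[k] x)
  have hδ : ∀ k x, ‖δ k x‖ ≤ B * r * r ^ k := by
    intro k x
    have hδx : δ k x = (m ^ (k + 1))⁻¹ * (ψ (f (f^[k] x)) - m * ψ (f^[k] x)) := by
      simp only [δ, iterate_succ_apply']
      field_simp
      ring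
    calc ‖δ k x‖ = r ^ (k + 1) * |ψ (f (f^[k] x)) - m * ψ (f^[k] x)| := by
          rw [hδx, norm_mul, norm_inv, norm_pow, Real.norm_eq_abs, Real.norm_eq_abs, inv_pow]
      _ ≤ r ^ (k + 1) * B := by gcongr; exact hB _
      _ = B * r * r ^ k := by ring
  have hsum : Summable fun k => B * r * r ^ k :=
    (summable_geometric_of_lt_one (by positivity) hr).mul_left _
  refine ⟨fun x => ψ x + ∑' k, δ k x, ?_, fun x => ?_⟩
  · exact hψ.add <| continuous_tsum (fun k => by fun_prop) hsum hδ
  · refine ((hsum.of_norm_bounded (hδ · x)).hasSum.tendsto_sum_nat.const_add (ψ x)).congr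
      fun n => ?_
    rw [Finset.sum_range_sub (fun k => (m ^ k)⁻¹ * ψ (f^[k] x))]
    simp

theorem map_eq_mul_of_tendsto_inv_pow_mul_iterate {φ : X → ℝ} (hm : m ≠ 0)
    (hφ : ∀ x, Tendsto (fun n : ℕ => (m ^ n)⁻¹ * ψ (f^[n] x)) atTop (𝓝 (φ x))) (x : X) :
    φ (f x) = m * φ x := by
  refine tendsto_nhds_unique (hφ (f x))
    ((((hφ x).comp (tendsto_add_atTop_nat 1)).const_mul m).congr fun n => ?_)
  simp only [comp_apply, iterate_succ_apply]
  field_simp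
  ring

end RenormalizedLimit

theorem iterate_add_of_mem {E : Type*} [Add E] {f T : E → E} {L : Set E} (hT : Set.MapsTo T L L)
    (hf : ∀ x, ∀ p ∈ L, f (x + p) = f x + T p) (n : ℕ) (x : E) {p : E} (hp : p ∈ L) :
    f^[n] (x + p) = f^[n] x + T^[n] p := by
  induction n generalizing x p with
  | zero => rfl
  | succ n ih => simp only [iterate_succ_apply, hf x p hp, ih _ (hT hp)]

theorem map_add_of_tendsto_inv_pow_mul_iterate {E Ψ : Type*} [AddCommGroup E] [FunLike Ψ E ℝ]
    [AddMonoidHomClass Ψ E ℝ] {f T : E → E} {L : Set E} {ψ : Ψ} {m : ℝ} {φ : E → ℝ}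
    (hT : Set.MapsTo T L L) (hf : ∀ x, ∀ p ∈ L, f (x + p) = f x + T p)
    (hψT : ∀ p, ψ (T p) = m * ψ p) (hm : m ≠ 0)
    (hφ : ∀ x, Tendsto (fun n : ℕ => (m ^ n)⁻¹ * ψ (f^[n] x)) atTop (𝓝 (φ x)))
    (x : E) {p : E} (hp : p ∈ L) :
    φ (x + p) = φ x + ψ p := by
  have hψTn : ∀ n, ψ (T^[n] p) = m ^ n * ψ p := fun n => by
    rw [(Semiconj.iterate_right (f := ψ) hψT n) p, mul_left_iterate]
  refine tendsto_nhds_unique (hφ (x + p)) (((hφ x).add_const (ψ p)).congr fun n => ?_)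
  rw [iterate_add_of_mem hT hf n x hp, map_add, hψTn]
  field_simp

theorem surjective_of_map_add_eq_add {E : Type*} [AddCommGroup E] [Module ℝ E]
    [TopologicalSpace E] [ContinuousSMul ℝ E] {φ : E → ℝ} (hφ : Continuous φ) {p : E} {c : ℝ}
    (hc : c ≠ 0) (hφp : ∀ x, φ (x + p) = φ x + c) :
    Surjective φ := by
  have hline : ∀ k : ℤ, φ ((k : ℝ) • p) = φ 0 + k * c := by
    intro k
    rw [Int.cast_smul_eq_zsmul]
    induction k using Int.induction_on with
    | zero => simp
    | succ k ih => rw [add_zsmul, one_zsmul, hφp, ih]; push_cast; ring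
    | pred k ih =>
      have := hφp ((-k - 1 : ℤ) • p)
      rw [sub_zsmul, one_zsmul] at this ⊢
      rw [neg_add_cancel_right, ih] at this
      push_cast at this ⊢; linarith
  intro w
  obtain ⟨n, hn⟩ := exists_nat_ge (|w - φ 0| / |c|)
  have hw : w ∈ Set.uIcc (φ (((-n : ℤ) : ℝ) • p)) (φ (((n : ℤ) : ℝ) • p)) := by
    rw [hline, hline, Set.mem_uIcc]
    have := (div_le_iff₀ (abs_pos.mpr hc)).mp hn
    rcases le_total 0 c with hc0 | hc0
    · left; constructor <;> push_cast <;>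
        nlinarith [abs_le.mp (this.trans_eq (by rw [abs_of_nonneg hc0]))]
    · right; constructor <;> push_cast <;>
        nlinarith [abs_le.mp (this.trans_eq (by rw [abs_of_nonpos hc0]))]
  obtain ⟨t, -, ht⟩ := intermediate_value_uIcc (f := fun t : ℝ => φ (t • p))
    (hφ.comp (continuous_id.smul continuous_const)).continuousOn hw
  exact ⟨t • p, ht⟩

theorem exists_semiconj_of_factorsThrough {X Y V : Type*} {π : X → Y} (hπ : Surjective π)
    {f : X → X} {h : X → V} {g : V → V} (hh : Semiconj h f g)
    (hfπ : FactorsThrough (π ∘ f) π) (hhπ : FactorsThrough h π) :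
    ∃ (fbar : Y → Y) (hbar : Y → V), (∀ x, fbar (π x) = π (f x)) ∧ (∀ x, hbar (π x) = h x) ∧
      Semiconj hbar fbar g := by
  set s := surjInv hπ
  have hs : ∀ x, π x = π (s (π x)) := fun x => (surjInv_eq hπ _).symm
  have hbar : ∀ x, h (s (π x)) = h x := fun x => (hhπ (hs x)).symm
  refine ⟨π ∘ f ∘ s, h ∘ s, fun x => (hfπ (hs x)).symm, hbar, fun y => ?_⟩
  obtain ⟨x, rfl⟩ := hπ y
  calc h (s (π (f (s (π x))))) = h (f (s (π x))) := hbar _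
    _ = g (h (s (π x))) := hh _

def intVec (d : ℕ) (p : Fin d → ℤ) : EuclideanSpace ℝ (Fin d) := toEuc d fun i => (p i : ℝ)

section Lattice

variable {d : ℕ}

theorem inner_toEuc (w : Fin d → ℝ) (z : EuclideanSpace ℝ (Fin d)) :
    inner ℝ (toEuc d w) z = ∑ i, w i * z i := by
  simp [PiLp.inner_apply, toEuc, mul_comm]

theorem inner_toEuc_mulVec {M : Matrix (Fin d) (Fin d) ℝ} {w : Fin d → ℝ} {μ : ℝ}
    (hw : Matrix.vecMul w M = μ • w) (z : EuclideanSpace ℝ (Fin d)) :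
    inner ℝ (toEuc d w) (toEuc d (M *ᵥ z)) = μ * inner ℝ (toEuc d w) z := by
  simp only [inner_toEuc]
  change w ⬝ᵥ (M *ᵥ z) = μ * (w ⬝ᵥ z)
  rw [Matrix.dotProduct_mulVec, hw, smul_dotProduct, smul_eq_mul]

theorem inner_intVec_intVec (v p : Fin d → ℤ) :
    inner ℝ (intVec d v) (intVec d p) = ((v ⬝ᵥ p : ℤ) : ℝ) := by
  rw [intVec, inner_toEuc]
  simp [intVec, toEuc, dotProduct]

theorem exists_intVec_eq_toEuc_mulVec {M : Matrix (Fin d) (Fin d) ℝ}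
    (hM : ∀ i j, ∃ n : ℤ, M i j = n) (p : Fin d → ℤ) :
    ∃ q, intVec d q = toEuc d (M *ᵥ intVec d p) := by
  choose N hN using hM
  exact ⟨N *ᵥ p, by ext i; simp [intVec, toEuc, Matrix.mulVec, dotProduct, hN]⟩

theorem AddCircle.coe_add_intCast (x : ℝ) (k : ℤ) : ((x + k : ℝ) : AddCircle (1 : ℝ)) = x := by
  rw [AddCircle.coe_add, (AddCircle.coe_eq_zero_iff (1 : ℝ) (x := k)).mpr ⟨k, by simp⟩, add_zero]

theorem torusProj_add_intVec (z : EuclideanSpace ℝ (Fin d)) (p : Fin d → ℤ) :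
    torusProj d (z + intVec d p) = torusProj d z :=
  funext fun i => AddCircle.coe_add_intCast (z i) (p i)

theorem exists_eq_add_intVec_of_torusProj_eq {z w : EuclideanSpace ℝ (Fin d)}
    (h : torusProj d z = torusProj d w) : ∃ p, w = z + intVec d p := by
  have hcoord : ∀ i, ∃ k : ℤ, k • (1 : ℝ) = w i - z i := fun i =>
    (AddCircle.coe_eq_zero_iff 1).mp <| by
      rw [AddCircle.coe_sub, sub_eq_zero]
      exact (congr_fun h i).symm
  choose p hp using hcoord
  refine ⟨p, ?_⟩
  ext i
  have := hp i
  simp only [zsmul_eq_mul, mul_one] at this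
  simp [intVec, toEuc, this]

theorem torusProj_surjective : Surjective (torusProj d) := by
  intro θ
  choose x hx using fun i => QuotientAddGroup.mk_surjective (θ i)
  exact ⟨toEuc d x, funext hx⟩

theorem lift_add_intVec {M : Matrix (Fin d) (Fin d) ℝ}
    {G F : EuclideanSpace ℝ (Fin d) → EuclideanSpace ℝ (Fin d)}
    (hGper : ∀ z p, G (z + intVec d p) = G z) (hF : ∀ z, F z = toEuc d (M *ᵥ z) + G z)
    (z : EuclideanSpace ℝ (Fin d)) (p : Fin d → ℤ) :
    F (z + intVec d p) = F z + toEuc d (M *ᵥ intVec d p) := by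
  rw [hF, hF, hGper]
  ext i
  simp [toEuc, Matrix.mulVec_add]
  ring

theorem exists_torus_semiconj {F : EuclideanSpace ℝ (Fin d) → EuclideanSpace ℝ (Fin d)}
    {φ : EuclideanSpace ℝ (Fin d) → ℝ} {m : ℤ}
    (hF : ∀ z p, ∃ q, F (z + intVec d p) = F z + intVec d q)
    (hφ : ∀ z p, ∃ k : ℤ, φ (z + intVec d p) = φ z + k) (hφF : ∀ z, φ (F z) = m * φ z) :
    ∃ (Fbar : (Fin d → AddCircle (1 : ℝ)) → (Fin d → AddCircle (1 : ℝ)))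
      (φbar : (Fin d → AddCircle (1 : ℝ)) → AddCircle (1 : ℝ)),
      (∀ z, Fbar (torusProj d z) = torusProj d (F z)) ∧
      (∀ z, φbar (torusProj d z) = ((φ z : ℝ) : AddCircle (1 : ℝ))) ∧
      (∀ θ, φbar (Fbar θ) = m • φbar θ) := by
  refine exists_semiconj_of_factorsThrough torusProj_surjective (f := F)
    (h := fun z => (φ z : AddCircle (1 : ℝ))) (g := (m • ·)) (fun z => ?_)
    (fun a b hab => ?_) (fun a b hab => ?_)
  · simp only [hφF, ← zsmul_eq_mul, AddCircle.coe_zsmul]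
  · obtain ⟨p, rfl⟩ := exists_eq_add_intVec_of_torusProj_eq hab
    obtain ⟨q, hq⟩ := hF a p
    simp only [comp_apply, hq, torusProj_add_intVec]
  · obtain ⟨p, rfl⟩ := exists_eq_add_intVec_of_torusProj_eq hab
    obtain ⟨k, hk⟩ := hφ a p
    simp only [hk, AddCircle.coe_add_intCast]

end Lattice

/--
Let `F̂(z) = Mz + G(z)` be a lift of a torus map. Suppose `v ∈ ℤ^d` is a
nonzero integer vector and `m` an integer with `|m| > 1` such that `vᵀM = m·vᵀ`. Then for
every `z ∈ ℝ^d` the limit `φ̂(z) := lim_{n→∞} m^{−n} (v · F̂ⁿ(z))` exists, `φ̂ : ℝ^d → ℝ`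
is continuous and onto, `φ̂(F̂(z)) = m·φ̂(z)` for all `z`, and `φ̂(z + p) = φ̂(z) + v·p` for
all `z ∈ ℝ^d`, `p ∈ ℤ^d`. Hence `F̂` descends to a torus map on `ℝ^d/ℤ^d` semi-conjugate
to the expanding circle map `x ↦ mx mod 1`.
-/
theorem stmt8 (d : ℕ)
    (M : Matrix (Fin d) (Fin d) ℝ) (hMint : ∀ i j, ∃ n : ℤ, M i j = (n : ℝ))
    (G : EuclideanSpace ℝ (Fin d) → EuclideanSpace ℝ (Fin d))
    (hGcont : Continuous G) (hGbdd : ∃ C, ∀ z, ‖G z‖ ≤ C)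
    (hGper : ∀ (z : EuclideanSpace ℝ (Fin d)) (p : Fin d → ℤ),
      G (z + toEuc d fun i => (p i : ℝ)) = G z)
    (F : EuclideanSpace ℝ (Fin d) → EuclideanSpace ℝ (Fin d))
    (hF : ∀ z, F z = toEuc d (M.mulVec z) + G z)
    (v : Fin d → ℤ) (hv : v ≠ 0) (m : ℤ) (hm : 1 < |m|)
    (hvM : ∀ j, ∑ i, (v i : ℝ) * M i j = (m : ℝ) * (v j : ℝ)) :
    ∃ φ : EuclideanSpace ℝ (Fin d) → ℝ,
      (∀ z, Tendsto (fun n : ℕ =>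
          ((m : ℝ) ^ n)⁻¹ * ∑ i, (v i : ℝ) * (F^[n] z) i) atTop (𝓝 (φ z))) ∧
      Continuous φ ∧ Function.Surjective φ ∧
      (∀ z, φ (F z) = (m : ℝ) * φ z) ∧
      (∀ (z : EuclideanSpace ℝ (Fin d)) (p : Fin d → ℤ),
        φ (z + toEuc d fun i => (p i : ℝ)) = φ z + ∑ i, (v i : ℝ) * (p i : ℝ)) ∧
      -- hence `F̂` descends to a torus map semi-conjugate to `x ↦ mx mod 1`:
      ∃ (Fbar : (Fin d → AddCircle (1 : ℝ)) → (Fin d → AddCircle (1 : ℝ)))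
        (φbar : (Fin d → AddCircle (1 : ℝ)) → AddCircle (1 : ℝ)),
        (∀ z, Fbar (torusProj d z) = torusProj d (F z)) ∧
        (∀ z, φbar (torusProj d z) = ((φ z : ℝ) : AddCircle (1 : ℝ))) ∧
        (∀ θ, φbar (Fbar θ) = m • φbar θ) := by
  obtain ⟨C, hC⟩ := hGbdd
  set ψ := innerSL ℝ (intVec d v)
  set T := fun z : EuclideanSpace ℝ (Fin d) => toEuc d (M *ᵥ z)
  have hmR : 1 < |(m : ℝ)| := by exact_mod_cast hm
  have hm0 : (m : ℝ) ≠ 0 := abs_pos.mp (zero_lt_one.trans hmR)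
  have hψT : ∀ z, ψ (T z) = m * ψ z := inner_toEuc_mulVec (funext hvM)
  have hψ : ∀ z, ψ z = ∑ i, (v i : ℝ) * z i := inner_toEuc _
  have hψL : ∀ p, ψ (intVec d p) = ((v ⬝ᵥ p : ℤ) : ℝ) := inner_intVec_intVec v
  have hTL : Set.MapsTo T (Set.range (intVec d)) (Set.range (intVec d)) := by
    rintro _ ⟨p, rfl⟩
    exact exists_intVec_eq_toEuc_mulVec hMint p
  have hFL : ∀ z, ∀ p ∈ Set.range (intVec d), F (z + p) = F z + T p := by
    rintro z _ ⟨p, rfl⟩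
    exact lift_add_intVec hGper hF z p
  obtain ⟨φ, hφc, hφ⟩ := exists_continuous_tendsto_inv_pow_mul_iterate (f := F)
    (by rw [funext hF]; unfold toEuc; fun_prop) ψ.continuous hmR (B := ‖ψ‖ * C) fun z => by
      rw [hF, map_add, hψT, add_sub_cancel_left, ← Real.norm_eq_abs]
      exact (ψ.le_opNorm _).trans (by gcongr; exact hC _)
  have hφL := map_add_of_tendsto_inv_pow_mul_iterate hTL hFL hψT hm0 hφ
  have hφF := map_eq_mul_of_tendsto_inv_pow_mul_iterate hm0 hφ
  obtain ⟨j, hj⟩ : ∃ j, v j ≠ 0 := Function.ne_iff.mp hv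
  refine ⟨φ, by simpa only [hψ] using hφ, hφc, ?_, hφF,
    fun z p => (hφL z ⟨p, rfl⟩).trans (by rw [hψ]; rfl), ?_⟩
  · refine surjective_of_map_add_eq_add hφc (p := intVec d (Pi.single j 1)) (c := v j)
      (by exact_mod_cast hj) fun z => (hφL z ⟨_, rfl⟩).trans ?_
    rw [hψL, dotProduct_single, mul_one]
  · refine exists_torus_semiconj (fun z p => ?_) (fun z p => ⟨v ⬝ᵥ p, ?_⟩) hφF
    · obtain ⟨q, hq⟩ := hTL ⟨p, rfl⟩
      exact ⟨q, by rw [hFL z _ ⟨p, rfl⟩, hq]⟩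
    · rw [hφL z ⟨p, rfl⟩, hψL]
end
end

section
/- Let F̂(z) = Mz + G(z) be a C¹ lift of a torus map with G of class C¹, satisfying the expanding-block assumption with k = 1 (so P(z) = z₁, P∘M = m·P for an integer m with |m| > 1), and admitting an invariant expanding cone structure with constants α > 0 and K > 1 centered on the first coordinate direction. Let Φ̂(z) = lim_{n→∞} m^{−n} P(F̂^n(z)). Then no two distinct points in the same fiber of Φ̂ can be connected by a conic curve: if γ: [0,1] → ℝ^d is a conic C¹ curve with γ(0) ≠ γ(1), then Φ̂(γ(0)) ≠ Φ̂(γ(1)). -/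
open Filter Topology

noncomputable section

/-- Projection onto the last `d - k` coordinates of `ℝ^d`. -/
def projQ (d k : ℕ) (h : k ≤ d) (z : EuclideanSpace ℝ (Fin d)) :
    EuclideanSpace ℝ (Fin (d - k)) :=
  WithLp.toLp 2 (fun j : Fin (d - k) => z ⟨k + j.val, by have := j.isLt; omega⟩)

/-!
Along a conic curve the first coordinate is strictly monotone, and since `DF̂` maps the cone into
itself while expanding first coordinates by `K`, the first-coordinate gap between the endpoints of
`F̂ⁿ ∘ γ` is at least `Kⁿ` times that of `γ`, which is nonzero. On the other hand
`P ∘ F̂ = m • P + P ∘ G` with `G` bounded, so `P (F̂ⁿ z)` stays within `C / (|m| - 1)` of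
`mⁿ Φ̂ z`: if `Φ̂` took the same value at both endpoints, these gaps would stay bounded.
-/

open Set

theorem abs_sub_le_sub_of_abs_deriv_le {f g f' g' : ℝ → ℝ} {a b : ℝ} (hab : a ≤ b)
    (hf : ∀ t ∈ Icc a b, HasDerivAt f (f' t) t) (hg : ∀ t ∈ Icc a b, HasDerivAt g (g' t) t)
    (hle : ∀ t ∈ Icc a b, |f' t| ≤ g' t) :
    |f b - f a| ≤ g b - g a := by
  have hmono : ∀ σ : ℝ, |σ| = 1 → MonotoneOn (fun t => g t - σ * f t) (Icc a b) := by
    intro σ hσ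
    refine monotoneOn_of_hasDerivWithinAt_nonneg (convex_Icc a b) (f' := fun t => g' t - σ * f' t)
      (fun t ht => ((hg t ht).sub ((hf t ht).const_mul σ)).continuousAt.continuousWithinAt)
      (fun t ht => ((hg t (interior_subset ht)).sub
        ((hf t (interior_subset ht)).const_mul σ)).hasDerivWithinAt) fun t ht => ?_
    have hσf : σ * f' t ≤ |f' t| := by simpa [abs_mul, hσ] using le_abs_self (σ * f' t)
    linarith [hle t (interior_subset ht)]
  have hsub (σ : ℝ) (hσ : |σ| = 1) : σ * (f b - f a) ≤ g b - g a := by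
    have hab' := hmono σ hσ ⟨le_rfl, hab⟩ ⟨hab, le_rfl⟩ hab
    dsimp only at hab'
    linarith
  rw [abs_le]
  constructor
  · linarith [hsub (-1) (by norm_num)]
  · linarith [hsub 1 (by norm_num)]

theorem abs_sub_le_abs_sub_of_abs_deriv_le {f g f' g' : ℝ → ℝ} {a b : ℝ} (hab : a ≤ b)
    (hf : ∀ t ∈ Icc a b, HasDerivAt f (f' t) t) (hg : ∀ t ∈ Icc a b, HasDerivAt g (g' t) t)
    (hg' : ∀ t ∈ Icc a b, g' t ≠ 0) (hle : ∀ t ∈ Icc a b, |f' t| ≤ |g' t|) :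
    |f b - f a| ≤ |g b - g a| := by
  -- Darboux: `g'` has constant sign on `[a, b]`
  rcases hasDerivWithinAt_forall_lt_or_forall_gt_of_forall_ne (convex_Icc a b)
    (fun t ht => (hg t ht).hasDerivWithinAt) hg' with hneg | hpos
  · have := abs_sub_le_sub_of_abs_deriv_le hab hf (fun t ht => (hg t ht).neg) fun t ht => by
      simpa [abs_of_neg (hneg t ht)] using hle t ht
    exact this.trans (by simp only [Pi.neg_apply]; linarith [neg_abs_le (g b - g a)])
  · have := abs_sub_le_sub_of_abs_deriv_le hab hf hg fun t ht => by
      simpa [abs_of_pos (hpos t ht)] using hle t ht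
    exact this.trans (le_abs_self _)

theorem sub_ne_zero_of_hasDerivAt_ne_zero {g g' : ℝ → ℝ} {a b : ℝ} (hab : a < b)
    (hg : ∀ t ∈ Icc a b, HasDerivAt g (g' t) t) (hg' : ∀ t ∈ Icc a b, g' t ≠ 0) :
    g b - g a ≠ 0 := by
  obtain ⟨c, hc, hslope⟩ := exists_hasDerivAt_eq_slope g g' hab
    (fun t ht => (hg t ht).continuousAt.continuousWithinAt)
    (fun t ht => hg t (Ioo_subset_Icc_self ht))
  have := hg' c (Ioo_subset_Icc_self hc)
  rw [hslope] at this
  exact fun h => this (by rw [h, zero_div])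

theorem abs_sub_pow_mul_le_of_tendsto {x : ℕ → ℝ} {m C φ : ℝ} (hm : 1 < |m|)
    (hx : ∀ n, |x (n + 1) - m * x n| ≤ C)
    (hφ : Tendsto (fun n => (m ^ n)⁻¹ * x n) atTop (𝓝 φ)) (n : ℕ) :
    |x n - m ^ n * φ| ≤ C / (|m| - 1) := by
  have hm0 : m ≠ 0 := by rintro rfl; norm_num at hm
  have hr : |m|⁻¹ < 1 := inv_lt_one_of_one_lt₀ hm
  have hstep : ∀ k, dist ((m ^ k)⁻¹ * x k) ((m ^ (k + 1))⁻¹ * x (k + 1)) ≤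
      C / |m| * |m|⁻¹ ^ k := by
    intro k
    have hdiff : (m ^ k)⁻¹ * x k - (m ^ (k + 1))⁻¹ * x (k + 1) =
        -((m ^ (k + 1))⁻¹ * (x (k + 1) - m * x k)) := by
      field_simp; ring
    rw [Real.dist_eq, hdiff, abs_neg, abs_mul, abs_inv, abs_pow]
    calc (|m| ^ (k + 1))⁻¹ * |x (k + 1) - m * x k| ≤ (|m| ^ (k + 1))⁻¹ * C := by
          gcongr; exact hx k
      _ = C / |m| * |m|⁻¹ ^ k := by rw [inv_pow, pow_succ, mul_inv]; ring
  have h := dist_le_of_le_geometric_of_tendsto _ _ hr hstep hφ n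
  rw [Real.dist_eq] at h
  have hpos : 0 < |m| - 1 := by linarith
  calc |x n - m ^ n * φ| = |m| ^ n * |(m ^ n)⁻¹ * x n - φ| := by
        rw [← abs_pow, ← abs_mul]; congr 1; field_simp
    _ ≤ |m| ^ n * (C / |m| * |m|⁻¹ ^ n / (1 - |m|⁻¹)) := by gcongr
    _ = C / (|m| - 1) := by
        have : |m| ≠ 0 := by positivity
        rw [inv_pow]; field_simp

theorem HasDerivAt.euclidean_apply {ι : Type*} [Fintype ι] {f : ℝ → EuclideanSpace ℝ ι}
    {f' : EuclideanSpace ℝ ι} {t : ℝ} (h : HasDerivAt f f' t) (i : ι) :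
    HasDerivAt (fun s => f s i) (f' i) t :=
  (PiLp.hasFDerivAt_apply 2 (f t) i).comp_hasDerivAt t h

section Cone

variable {d : ℕ}

def InCone (hd : 0 < d) (α : ℝ) (v : EuclideanSpace ℝ (Fin d)) : Prop :=
  ‖projQ d 1 hd v‖ ≤ α * |v ⟨0, hd⟩|

variable {hd : 0 < d} {α K : ℝ} {F : EuclideanSpace ℝ (Fin d) → EuclideanSpace ℝ (Fin d)}

theorem eq_zero_of_apply_zero_of_projQ_eq_zero {v : EuclideanSpace ℝ (Fin d)}
    (h0 : v ⟨0, hd⟩ = 0) (hQ : projQ d 1 hd v = 0) : v = 0 := by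
  ext ⟨i, hi⟩
  rcases Nat.eq_zero_or_pos i with rfl | hpos
  · exact h0
  · have := congrFun (congrArg WithLp.ofLp hQ) ⟨i - 1, by omega⟩
    simpa [projQ, Nat.add_sub_cancel' hpos] using this

theorem InCone.apply_zero_ne_zero {v : EuclideanSpace ℝ (Fin d)}
    (hv : InCone hd α v) (hv0 : v ≠ 0) : v ⟨0, hd⟩ ≠ 0 := fun h0 =>
  hv0 <| eq_zero_of_apply_zero_of_projQ_eq_zero h0 <| norm_le_zero_iff.1 <| by
    simpa [InCone, h0] using hv

theorem exists_hasDerivAt_iterate_comp (hF : Differentiable ℝ F) (hK : 0 ≤ K)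
    (hcone : ∀ z v, InCone hd α v →
      InCone hd α (fderiv ℝ F z v) ∧ K * |v ⟨0, hd⟩| ≤ |fderiv ℝ F z v ⟨0, hd⟩|)
    {γ : ℝ → EuclideanSpace ℝ (Fin d)} {v : EuclideanSpace ℝ (Fin d)} {t : ℝ}
    (hγ : HasDerivAt γ v t) (hv : InCone hd α v) (n : ℕ) :
    ∃ w, HasDerivAt (fun s => F^[n] (γ s)) w t ∧ InCone hd α w ∧
      K ^ n * |v ⟨0, hd⟩| ≤ |w ⟨0, hd⟩| := by
  induction n with
  | zero => exact ⟨v, hγ, hv, by simp⟩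
  | succ n ih =>
    obtain ⟨w, hw, hwcone, hwgrow⟩ := ih
    obtain ⟨hcone', hexp⟩ := hcone (F^[n] (γ t)) w hwcone
    refine ⟨_, ?_, hcone', ?_⟩
    · simp only [Function.iterate_succ_apply']
      exact (hF _).hasFDerivAt.comp_hasDerivAt t hw
    · calc K ^ (n + 1) * |v ⟨0, hd⟩| = K * (K ^ n * |v ⟨0, hd⟩|) := by ring
        _ ≤ K * |w ⟨0, hd⟩| := by gcongr
        _ ≤ _ := hexp

theorem pow_mul_abs_sub_le_abs_sub_iterate (hF : Differentiable ℝ F) (hK : 0 < K)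
    (hcone : ∀ z v, InCone hd α v →
      InCone hd α (fderiv ℝ F z v) ∧ K * |v ⟨0, hd⟩| ≤ |fderiv ℝ F z v ⟨0, hd⟩|)
    {γ γ' : ℝ → EuclideanSpace ℝ (Fin d)} {a b : ℝ} (hab : a ≤ b)
    (hγ : ∀ t ∈ Icc a b, HasDerivAt γ (γ' t) t)
    (hconic : ∀ t ∈ Icc a b, γ' t ≠ 0 ∧ InCone hd α (γ' t)) (n : ℕ) :
    K ^ n * |γ b ⟨0, hd⟩ - γ a ⟨0, hd⟩| ≤
      |F^[n] (γ b) ⟨0, hd⟩ - F^[n] (γ a) ⟨0, hd⟩| := by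
  choose! w hw _ hgrow using fun t ht =>
    exists_hasDerivAt_iterate_comp hF hK.le hcone (hγ t ht) (hconic t ht).2 n
  have hKn := pow_pos hK n
  have key := abs_sub_le_abs_sub_of_abs_deriv_le hab (f := fun s => K ^ n * γ s ⟨0, hd⟩)
    (fun t ht => ((hγ t ht).euclidean_apply _).const_mul _)
    (fun t ht => (hw t ht).euclidean_apply _)
    (fun t ht => abs_pos.1 <| (mul_pos hKn <| abs_pos.2 <|
      (hconic t ht).2.apply_zero_ne_zero (hconic t ht).1).trans_le (hgrow t ht))
    (fun t ht => by rw [abs_mul, abs_of_pos hKn]; exact hgrow t ht)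
  rwa [← mul_sub, abs_mul, abs_of_pos hKn] at key

end Cone

theorem stmt13_general (d : ℕ) (hd : 0 < d)
    (M : Matrix (Fin d) (Fin d) ℝ)
    (G : EuclideanSpace ℝ (Fin d) → EuclideanSpace ℝ (Fin d))
    (hGC1 : ContDiff ℝ 1 G) (hGbdd : ∃ C, ∀ z, ‖G z‖ ≤ C)
    (F : EuclideanSpace ℝ (Fin d) → EuclideanSpace ℝ (Fin d))
    (hF : ∀ z, F z = toEuc d (M.mulVec z) + G z)
    (m : ℤ) (hm : 1 < |m|)
    (hPM : ∀ z : EuclideanSpace ℝ (Fin d),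
      toEuc d (M.mulVec z) ⟨0, hd⟩ = (m : ℝ) * z ⟨0, hd⟩)
    (α K : ℝ) (hK : 1 < K)
    (hcone : ∀ (z v : EuclideanSpace ℝ (Fin d)),
      ‖projQ d 1 hd v‖ ≤ α * |v ⟨0, hd⟩| →
        ‖projQ d 1 hd (fderiv ℝ F z v)‖ ≤ α * |(fderiv ℝ F z v) ⟨0, hd⟩| ∧
        K * |v ⟨0, hd⟩| ≤ |(fderiv ℝ F z v) ⟨0, hd⟩|)
    (Φ : EuclideanSpace ℝ (Fin d) → ℝ)
    (hΦ : ∀ z, Tendsto (fun n : ℕ => ((m : ℝ) ^ n)⁻¹ * (F^[n] z) ⟨0, hd⟩)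
      atTop (𝓝 (Φ z)))
    (γ : ℝ → EuclideanSpace ℝ (Fin d)) (γ' : ℝ → EuclideanSpace ℝ (Fin d))
    (hγderiv : ∀ t ∈ Set.Icc (0 : ℝ) 1, HasDerivAt γ (γ' t) t)
    (hγconic : ∀ t ∈ Set.Icc (0 : ℝ) 1,
      γ' t ≠ 0 ∧ ‖projQ d 1 hd (γ' t)‖ ≤ α * |γ' t ⟨0, hd⟩|) :
    Φ (γ 0) ≠ Φ (γ 1) := by
  obtain ⟨C, hC⟩ := hGbdd
  have hFd : Differentiable ℝ F := by
    rw [show F = fun z => Matrix.toEuclideanCLM (𝕜 := ℝ) M z + G z from funext hF]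
    exact (ContinuousLinearMap.differentiable _).add (hGC1.differentiable one_ne_zero)
  have hclose (z : EuclideanSpace ℝ (Fin d)) (n : ℕ) :
      |F^[n] z ⟨0, hd⟩ - (m : ℝ) ^ n * Φ z| ≤ C / (|(m : ℝ)| - 1) := by
    refine abs_sub_pow_mul_le_of_tendsto (by exact_mod_cast hm) (fun k => ?_) (hΦ z) n
    rw [Function.iterate_succ_apply', hF, PiLp.add_apply, hPM, add_sub_cancel_left]
    exact (PiLp.norm_apply_le _ _).trans (hC _)
  have hgrowth := pow_mul_abs_sub_le_abs_sub_iterate hFd (zero_lt_one.trans hK) hcone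
    zero_le_one hγderiv hγconic
  have hΔ : 0 < |γ 1 ⟨0, hd⟩ - γ 0 ⟨0, hd⟩| := abs_pos.2 <|
    sub_ne_zero_of_hasDerivAt_ne_zero zero_lt_one (fun t ht => (hγderiv t ht).euclidean_apply _)
      fun t ht => InCone.apply_zero_ne_zero (hγconic t ht).2 (hγconic t ht).1
  intro hΦeq
  have hbounded (n : ℕ) :
      |F^[n] (γ 1) ⟨0, hd⟩ - F^[n] (γ 0) ⟨0, hd⟩| ≤ 2 * (C / (|(m : ℝ)| - 1)) := by
    have h0 := hclose (γ 0) n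
    have h1 := hclose (γ 1) n
    rw [← hΦeq] at h1
    have htri :=
      abs_sub_le (F^[n] (γ 1) ⟨0, hd⟩) ((m : ℝ) ^ n * Φ (γ 0)) (F^[n] (γ 0) ⟨0, hd⟩)
    rw [abs_sub_comm ((m : ℝ) ^ n * Φ (γ 0))] at htri
    linarith
  obtain ⟨n, hn⟩ :=
    pow_unbounded_of_one_lt (2 * (C / (|(m : ℝ)| - 1)) / |γ 1 ⟨0, hd⟩ - γ 0 ⟨0, hd⟩|) hK
  linarith [(div_lt_iff₀ hΔ).1 hn, hgrowth n, hbounded n]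

/--
Let `F̂(z) = Mz + G(z)` be a C¹ lift of a torus map with `G` of class
C¹, satisfying the expanding-block assumption with `k = 1` (so `P(z) = z₁`,
`P∘M = m·P` for an integer `m` with `|m| > 1`), and admitting an invariant expanding cone
structure with constants `α > 0` and `K > 1` centered on the first coordinate direction.
Let `Φ̂(z) = lim_{n→∞} m^{−n} P(F̂ⁿ(z))`. Then no two distinct points in the same fiber of
`Φ̂` can be connected by a conic curve: if `γ : [0,1] → ℝ^d` is a conic C¹ curve with
`γ(0) ≠ γ(1)`, then `Φ̂(γ(0)) ≠ Φ̂(γ(1))`.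
-/
theorem stmt13 (d : ℕ) (hd : 0 < d)
    (M : Matrix (Fin d) (Fin d) ℝ) (hMint : ∀ i j, ∃ n : ℤ, M i j = (n : ℝ))
    (G : EuclideanSpace ℝ (Fin d) → EuclideanSpace ℝ (Fin d))
    (hGC1 : ContDiff ℝ 1 G) (hGbdd : ∃ C, ∀ z, ‖G z‖ ≤ C)
    (hGper : ∀ (z : EuclideanSpace ℝ (Fin d)) (p : Fin d → ℤ),
      G (z + toEuc d fun i => (p i : ℝ)) = G z)
    (F : EuclideanSpace ℝ (Fin d) → EuclideanSpace ℝ (Fin d))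
    (hF : ∀ z, F z = toEuc d (M.mulVec z) + G z)
    (m : ℤ) (hm : 1 < |m|)
    (hPM : ∀ z : EuclideanSpace ℝ (Fin d),
      toEuc d (M.mulVec z) ⟨0, hd⟩ = (m : ℝ) * z ⟨0, hd⟩)
    (α K : ℝ) (hα : 0 < α) (hK : 1 < K)
    (hcone : ∀ (z v : EuclideanSpace ℝ (Fin d)),
      ‖projQ d 1 hd v‖ ≤ α * |v ⟨0, hd⟩| →
        ‖projQ d 1 hd (fderiv ℝ F z v)‖ ≤ α * |(fderiv ℝ F z v) ⟨0, hd⟩| ∧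
        K * |v ⟨0, hd⟩| ≤ |(fderiv ℝ F z v) ⟨0, hd⟩|)
    (Φ : EuclideanSpace ℝ (Fin d) → ℝ)
    (hΦ : ∀ z, Tendsto (fun n : ℕ => ((m : ℝ) ^ n)⁻¹ * (F^[n] z) ⟨0, hd⟩)
      atTop (𝓝 (Φ z)))
    (γ : ℝ → EuclideanSpace ℝ (Fin d)) (γ' : ℝ → EuclideanSpace ℝ (Fin d))
    (hγderiv : ∀ t ∈ Set.Icc (0 : ℝ) 1, HasDerivAt γ (γ' t) t)
    (hγconic : ∀ t ∈ Set.Icc (0 : ℝ) 1,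
      γ' t ≠ 0 ∧ ‖projQ d 1 hd (γ' t)‖ ≤ α * |γ' t ⟨0, hd⟩|)
    (hne : γ 0 ≠ γ 1) :
    Φ (γ 0) ≠ Φ (γ 1) :=
  stmt13_general d hd M G hGC1 hGbdd F hF m hm hPM α K hK hcone Φ hΦ γ γ' hγderiv hγconic
end
end
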